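/- Let r ≤ n, let eu = ∏_{1≤j≤r, r+1≤i≤n}(λᵢ − λⱼ), let Δₙ = ∏_{1≤i<j≤n}(λⱼ − λᵢ), Δᵣ = ∏_{1≤i<j≤r}(λⱼ−λᵢ), Δ'_{n−r} = ∏_{r+1≤i<j≤n}(λⱼ−λᵢ). Then Δₙ = Δᵣ · Δ'_{n−r} · eu. Consequently, for symmetric polynomials f₁ ∈ ℚ[λ₁,…,λᵣ]^{𝔖ᵣ} and f₂ ∈ ℚ[λ_{r+1},…,λₙ]^{𝔖_{n−r}} and any symmetric rational function fac invariant under 𝔖ᵣ×𝔖_{n−r}, one has ∑_{σ∈Sh(r,n−r)} sign(σ)·σ( f₁·Δᵣ·f₂·Δ'_{n−r}·fac·eu ) = ( ∑_{σ∈Sh(r,n−r)} σ( f₁·f₂·fac ) )·Δₙ. -/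
import Mathlib


open MvPolynomial Equiv

noncomputable section

/-- The polynomial ring `ℚ[λ₁,…,λₙ]`. -/
abbrev PolyS (n : ℕ) := MvPolynomial (Fin n) ℚ

/-- Its field of fractions (rational functions). -/
abbrev FracK (n : ℕ) := FractionRing (PolyS n)

/-- The action of a permutation of the variables on the field of rational functions. -/
def permAct (n : ℕ) (σ : Perm (Fin n)) : FracK n ≃+* FracK n :=
  IsFractionRing.ringEquivOfRingEquiv (renameEquiv ℚ σ).toRingEquiv

/-- The set of `(r, n-r)`-shuffles in `𝔖ₙ`. -/
def shuffles (n r : ℕ) : Finset (Perm (Fin n)) :=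
  Finset.univ.filter fun σ =>
    ∀ i j : Fin n, i < j → ((j : ℕ) < r ∨ r ≤ (i : ℕ)) → σ i < σ j

/-- The Euler factor `eu = ∏_{1≤j≤r, r+1≤i≤n} (λᵢ - λⱼ)`. -/
def euFactor (n r : ℕ) : PolyS n :=
  ∏ p ∈ Finset.univ.filter (fun p : Fin n × Fin n => (p.1 : ℕ) < r ∧ r ≤ (p.2 : ℕ)),
    (X p.2 - X p.1)

/-- The full Vandermonde `Δₙ = ∏_{i<j} (λⱼ - λᵢ)`. -/
def deltaN (n : ℕ) : PolyS n :=
  ∏ p ∈ Finset.univ.filter (fun p : Fin n × Fin n => p.1 < p.2), (X p.2 - X p.1)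

/-- The Vandermonde `Δᵣ` of the first block of variables. -/
def deltaR (n r : ℕ) : PolyS n :=
  ∏ p ∈ Finset.univ.filter (fun p : Fin n × Fin n => p.1 < p.2 ∧ (p.2 : ℕ) < r),
    (X p.2 - X p.1)

/-- The Vandermonde `Δ'_{n-r}` of the second block of variables. -/
def deltaS (n r : ℕ) : PolyS n :=
  ∏ p ∈ Finset.univ.filter (fun p : Fin n × Fin n => p.1 < p.2 ∧ r ≤ (p.1 : ℕ)),
    (X p.2 - X p.1)

/-- Auxiliary: the product over ordered pairs equals the Vandermonde determinant. -/
lemma prod_pairs_eq_det (n : ℕ) (f : Fin n → PolyS n) :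
    ∏ p ∈ Finset.univ.filter (fun p : Fin n × Fin n => p.1 < p.2), (f p.2 - f p.1)
    = Matrix.det (Matrix.vandermonde f) := by
  rw [Matrix.det_vandermonde, Finset.prod_filter, Fintype.prod_prod_type]
  refine Finset.prod_congr rfl fun i _ => ?_
  rw [show (Finset.Ioi i) = Finset.univ.filter (fun j => i < j) by ext j; simp,
    Finset.prod_filter]

/-- Auxiliary: the Vandermonde is alternating. -/
lemma rename_deltaN (n : ℕ) (σ : Perm (Fin n)) :
    rename ⇑σ (deltaN n) = ((Perm.sign σ : ℤ) : PolyS n) * deltaN n := by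
  have h1 : rename ⇑σ (deltaN n)
      = Matrix.det (Matrix.vandermonde fun i : Fin n => (X (σ i) : PolyS n)) := by
    rw [deltaN, map_prod, ← prod_pairs_eq_det]
    simp
  have h2 : (Matrix.vandermonde fun i : Fin n => (X (σ i) : PolyS n))
      = (Matrix.vandermonde fun i : Fin n => (X i : PolyS n)).submatrix σ id := by
    ext i j; simp [Matrix.vandermonde]
  rw [h1, h2, Matrix.det_permute, deltaN, prod_pairs_eq_det]

/-- Auxiliary: `permAct` on the image of a polynomial is renaming. -/
lemma permAct_algebraMap (n : ℕ) (σ : Perm (Fin n)) (p : PolyS n) :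
    permAct n σ (algebraMap (PolyS n) (FracK n) p)
      = algebraMap (PolyS n) (FracK n) (rename ⇑σ p) := by
  simpa [permAct] using
    IsFractionRing.ringEquivOfRingEquiv_algebraMap (renameEquiv ℚ σ).toRingEquiv p

/-- `Δₙ = Δᵣ·Δ'_{n-r}·eu`, and the resulting identity between the signed shuffle-sum of
`f₁Δᵣ·f₂Δ'_{n-r}·fac·eu` and `(∑ σ(f₁f₂·fac))·Δₙ`. -/
theorem stmt_6 (n r : ℕ) (hr : r ≤ n) :
    deltaN n = deltaR n r * deltaS n r * euFactor n r
    ∧ ∀ (f₁ f₂ : PolyS n) (fac : FracK n),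
        (∀ i : Fin n, r ≤ (i : ℕ) → i ∉ f₁.vars) →
        (∀ i : Fin n, (i : ℕ) < r → i ∉ f₂.vars) →
        (∀ σ : Perm (Fin n),
          (∀ i : Fin n, (i : ℕ) < r → ((σ i : ℕ) < r)) → rename ⇑σ f₁ = f₁) →
        (∀ σ : Perm (Fin n),
          (∀ i : Fin n, (i : ℕ) < r → ((σ i : ℕ) < r)) → rename ⇑σ f₂ = f₂) →
        (∀ σ : Perm (Fin n),
          (∀ i : Fin n, (i : ℕ) < r → ((σ i : ℕ) < r)) → permAct n σ fac = fac) →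
        ∑ σ ∈ shuffles n r,
            ((Perm.sign σ : ℤ) : FracK n) *
              permAct n σ
                (algebraMap (PolyS n) (FracK n) (f₁ * deltaR n r * f₂ * deltaS n r)
                  * fac * algebraMap (PolyS n) (FracK n) (euFactor n r))
          = (∑ σ ∈ shuffles n r,
              permAct n σ (algebraMap (PolyS n) (FracK n) (f₁ * f₂) * fac))
            * algebraMap (PolyS n) (FracK n) (deltaN n) := by
  have hfact : deltaN n = deltaR n r * deltaS n r * euFactor n r := by
    have hsplit1 := Finset.prod_filter_mul_prod_filter_not
      (Finset.univ.filter (fun p : Fin n × Fin n => p.1 < p.2))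
      (fun p : Fin n × Fin n => (p.2 : ℕ) < r)
      (fun p : Fin n × Fin n => (X p.2 - X p.1 : PolyS n))
    have hsplit2 := Finset.prod_filter_mul_prod_filter_not
      ((Finset.univ.filter (fun p : Fin n × Fin n => p.1 < p.2)).filter
        (fun p : Fin n × Fin n => ¬ (p.2 : ℕ) < r))
      (fun p : Fin n × Fin n => r ≤ (p.1 : ℕ))
      (fun p : Fin n × Fin n => (X p.2 - X p.1 : PolyS n))
    have e1 : (Finset.univ.filter (fun p : Fin n × Fin n => p.1 < p.2)).filter
        (fun p : Fin n × Fin n => (p.2 : ℕ) < r)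
        = Finset.univ.filter (fun p : Fin n × Fin n => p.1 < p.2 ∧ (p.2 : ℕ) < r) := by
      rw [Finset.filter_filter]
    have e2 : ((Finset.univ.filter (fun p : Fin n × Fin n => p.1 < p.2)).filter
        (fun p : Fin n × Fin n => ¬ (p.2 : ℕ) < r)).filter
        (fun p : Fin n × Fin n => r ≤ (p.1 : ℕ))
        = Finset.univ.filter (fun p : Fin n × Fin n => p.1 < p.2 ∧ r ≤ (p.1 : ℕ)) := by
      rw [Finset.filter_filter, Finset.filter_filter]
      ext p
      simp only [Finset.mem_filter, Finset.mem_univ, true_and, Fin.lt_def]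
      omega
    have e3 : ((Finset.univ.filter (fun p : Fin n × Fin n => p.1 < p.2)).filter
        (fun p : Fin n × Fin n => ¬ (p.2 : ℕ) < r)).filter
        (fun p : Fin n × Fin n => ¬ r ≤ (p.1 : ℕ))
        = Finset.univ.filter (fun p : Fin n × Fin n => (p.1 : ℕ) < r ∧ r ≤ (p.2 : ℕ)) := by
      rw [Finset.filter_filter, Finset.filter_filter]
      ext p
      simp only [Finset.mem_filter, Finset.mem_univ, true_and, Fin.lt_def]
      omega
    rw [e2, e3] at hsplit2
    rw [e1, ← hsplit2] at hsplit1
    rw [deltaN, deltaR, deltaS, euFactor, ← hsplit1]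
    ring
  refine ⟨hfact, fun f₁ f₂ fac _ _ _ _ _ => ?_⟩
  rw [Finset.sum_mul]
  refine Finset.sum_congr rfl fun σ _ => ?_
  have hA : algebraMap (PolyS n) (FracK n) (f₁ * deltaR n r * f₂ * deltaS n r)
        * fac * algebraMap (PolyS n) (FracK n) (euFactor n r)
      = algebraMap (PolyS n) (FracK n) (f₁ * f₂) * fac
        * algebraMap (PolyS n) (FracK n) (deltaN n) := by
    rw [hfact]
    push_cast [map_mul]
    ring
  rw [hA]
  simp only [map_mul, permAct_algebraMap]
  rw [rename_deltaN, map_mul, map_intCast]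
  have hsq : ((Perm.sign σ : ℤ) : FracK n) * ((Perm.sign σ : ℤ) : FracK n) = 1 := by
    have h1 : ((Perm.sign σ : ℤ) * (Perm.sign σ : ℤ) : ℤ) = 1 := by
      rcases Int.units_eq_one_or (Perm.sign σ) with h | h <;> rw [h] <;> rfl
    exact_mod_cast congrArg (fun z : ℤ => ((z : FracK n))) h1
  linear_combination (algebraMap (PolyS n) (FracK n) (rename ⇑σ f₁) *
    algebraMap (PolyS n) (FracK n) (rename ⇑σ f₂) *
    permAct n σ fac * algebraMap (PolyS n) (FracK n) (deltaN n)) * hsq
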